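/- arXiv:2307.01932 — 2 statements merged into one kernel-verified Lean document; each statement's English description precedes it below -/
import Mathlib

section
/- Let S be a fixed tree structure on {1,…,n} with splits partitioned as S = S^(1) ⊔ … ⊔ S^(p), let f ∈ ℝⁿ be a fixed vector, and let ε_1, …, ε_n be independent real random variables with E[ε_i] = 0 and Var(ε_i) = σ² for all i. Define the random response vector y by y_i = f_i + ε_i. Then for each feature k, E[ MDI(k; S, y) ] = MDI(k; S, f) + σ² |S^(k)| / n, where MDI(k; S, f) is the MDI computed from the noiseless responses f and |S^(k)| is the number of splits on feature k. -/
open Finset MeasureTheory RealInnerProductSpace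

/-- A split of a node into two disjoint nonempty children. -/
structure Split (n : ℕ) where
  left : Finset (Fin n)
  right : Finset (Fin n)
  left_nonempty : left.Nonempty
  right_nonempty : right.Nonempty
  disjoint : Disjoint left right

/-- The node being split is the union of the two children. -/
def Split.node {n : ℕ} (s : Split n) : Finset (Fin n) := s.left ∪ s.right

/-- Mean of the responses `y` over a subset `t` of samples. -/
noncomputable def meanOn {n : ℕ} (y : Fin n → ℝ) (t : Finset (Fin n)) : ℝ :=
  (∑ i ∈ t, y i) / t.card

/-- Impurity decrease of a split. -/
noncomputable def impurityDecrease {n : ℕ} (s : Split n) (y : Fin n → ℝ) : ℝ :=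
  (s.node.card : ℝ)⁻¹ *
    (∑ i ∈ s.node, (y i - meanOn y s.node) ^ 2
      - ∑ i ∈ s.left, (y i - meanOn y s.left) ^ 2
      - ∑ i ∈ s.right, (y i - meanOn y s.right) ^ 2)

/-- The local decision stump associated to a split. -/
noncomputable def stump {n : ℕ} (s : Split n) : EuclideanSpace ℝ (Fin n) := WithLp.toLp 2 fun i =>
  if i ∈ s.left then (s.right.card : ℝ) / Real.sqrt (s.left.card * s.right.card)
  else if i ∈ s.right then -(s.left.card : ℝ) / Real.sqrt (s.left.card * s.right.card)
  else 0

/-- The constant vector of all ones. -/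
noncomputable def ones (n : ℕ) : EuclideanSpace ℝ (Fin n) := WithLp.toLp 2 fun _ => 1

/-- A tree structure: any two distinct splits have disjoint or suitably nested nodes. -/
def IsTreeStructure {n : ℕ} (S : Finset (Split n)) : Prop :=
  ∀ s ∈ S, ∀ s' ∈ S, s ≠ s' →
    s.node ∩ s'.node = ∅ ∨ s'.node ⊆ s.left ∨ s'.node ⊆ s.right ∨
      s.node ⊆ s'.left ∨ s.node ⊆ s'.right

/-- Mean decrease in impurity (MDI) of feature `k`, where `feat` assigns to each split the
feature it splits on. -/
noncomputable def MDI {n p : ℕ} (S : Finset (Split n)) (feat : Split n → Fin p)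
    (k : Fin p) (y : Fin n → ℝ) : ℝ :=
  (n : ℝ)⁻¹ * ∑ s ∈ S.filter (fun s => feat s = k), (s.node.card : ℝ) * impurityDecrease s y

/-- A rooted tree structure: a finite nonempty set of splits with pairwise distinct nodes,
exactly one of which is the full sample set, and every non-root node is a child of some split. -/
def IsRootedTree {n : ℕ} (S : Finset (Split n)) : Prop :=
  S.Nonempty ∧ Set.InjOn Split.node (↑S : Set (Split n)) ∧ (∃ s ∈ S, s.node = Finset.univ) ∧
    ∀ s ∈ S, s.node ≠ Finset.univ → ∃ s' ∈ S, s.node = s'.left ∨ s.node = s'.right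

/-- The leaves of a rooted tree structure: children of splits that are not themselves split. -/
def leafSet {n : ℕ} (S : Finset (Split n)) : Finset (Finset (Fin n)) :=
  (S.image Split.left ∪ S.image Split.right).filter fun t => ∀ s ∈ S, s.node ≠ t

lemma sum_sq_dev {n : ℕ} (y : Fin n → ℝ) (t : Finset (Fin n)) (ht : t.Nonempty) :
    ∑ i ∈ t, (y i - meanOn y t) ^ 2
      = ∑ i ∈ t, y i ^ 2 - (∑ i ∈ t, y i) ^ 2 / t.card := by
  have hc : (t.card : ℝ) ≠ 0 := Nat.cast_ne_zero.mpr (Finset.card_ne_zero_of_mem ht.choose_spec)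
  have h1 : ∀ i ∈ t, (y i - meanOn y t) ^ 2
      = y i ^ 2 - 2 * meanOn y t * y i + meanOn y t ^ 2 := by intro i _; ring
  rw [Finset.sum_congr rfl h1]
  rw [Finset.sum_add_distrib, Finset.sum_sub_distrib, ← Finset.mul_sum, Finset.sum_const,
    nsmul_eq_mul, meanOn]
  field_simp
  ring

lemma node_nonempty {n : ℕ} (s : Split n) : s.node.Nonempty :=
  s.left_nonempty.mono (Finset.subset_union_left)

lemma node_card {n : ℕ} (s : Split n) : (s.node.card : ℝ) = s.left.card + s.right.card := by
  rw [Split.node, Finset.card_union_of_disjoint s.disjoint]; push_cast; ring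

lemma nodeCard_mul_impurity {n : ℕ} (s : Split n) (y : Fin n → ℝ) :
    (s.node.card : ℝ) * impurityDecrease s y
      = (s.left.card * s.right.card / s.node.card)
          * (meanOn y s.left - meanOn y s.right) ^ 2 := by
  have hl : (s.left.card : ℝ) ≠ 0 :=
    Nat.cast_ne_zero.mpr (Finset.card_ne_zero_of_mem s.left_nonempty.choose_spec)
  have hr : (s.right.card : ℝ) ≠ 0 :=
    Nat.cast_ne_zero.mpr (Finset.card_ne_zero_of_mem s.right_nonempty.choose_spec)
  have hsum : ∑ i ∈ s.node, y i = ∑ i ∈ s.left, y i + ∑ i ∈ s.right, y i :=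
    Finset.sum_union s.disjoint
  have hsq : ∑ i ∈ s.node, (y i) ^ 2 = ∑ i ∈ s.left, (y i) ^ 2 + ∑ i ∈ s.right, (y i) ^ 2 :=
    Finset.sum_union s.disjoint
  have hN : (s.node.card : ℝ) ≠ 0 := by
    rw [node_card]; positivity
  rw [impurityDecrease, sum_sq_dev _ _ (node_nonempty s), sum_sq_dev _ _ s.left_nonempty,
    sum_sq_dev _ _ s.right_nonempty, meanOn, meanOn, hsum, hsq, node_card s]
  rw [node_card s] at hN
  field_simp
  ring

open ProbabilityTheory in
lemma aux_split {n : ℕ} {Ω : Type} [MeasurableSpace Ω] (μ : Measure Ω) [IsProbabilityMeasure μ]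
    (s : Split n) (f : Fin n → ℝ) (ε : Fin n → Ω → ℝ) (σ : ℝ)
    (hindep : iIndepFun ε μ)
    (hL2 : ∀ i, MemLp (ε i) 2 μ)
    (hmean : ∀ i, ∫ ω, ε i ω ∂μ = 0)
    (hvar : ∀ i, variance (ε i) μ = σ ^ 2) :
    Integrable (fun ω => (s.node.card : ℝ) * impurityDecrease s (fun i => f i + ε i ω)) μ ∧
    ∫ ω, (s.node.card : ℝ) * impurityDecrease s (fun i => f i + ε i ω) ∂μ
      = (s.node.card : ℝ) * impurityDecrease s f + σ ^ 2 := by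
  classical
  have hl : (s.left.card : ℝ) ≠ 0 :=
    Nat.cast_ne_zero.mpr (Finset.card_ne_zero_of_mem s.left_nonempty.choose_spec)
  have hr : (s.right.card : ℝ) ≠ 0 :=
    Nat.cast_ne_zero.mpr (Finset.card_ne_zero_of_mem s.right_nonempty.choose_spec)
  have hN : (s.node.card : ℝ) ≠ 0 := by rw [node_card]; positivity
  set c : Fin n → ℝ :=
    fun i => if i ∈ s.left then (s.left.card : ℝ)⁻¹ else -(s.right.card : ℝ)⁻¹ with hc
  set Z : Ω → ℝ := fun ω => ∑ i ∈ s.node, c i * ε i ω with hZ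
  set a : ℝ := meanOn f s.left - meanOn f s.right with ha
  have hZeq : Z = ∑ i ∈ s.node, fun ω => c i * ε i ω := by
    funext ω; rw [hZ, Finset.sum_apply]
  have hZmem : MemLp Z 2 μ := by
    rw [hZeq]; exact memLp_finset_sum' _ (fun i _ => (hL2 i).const_mul (c i))
  have hZint : Integrable Z μ := hZmem.integrable one_le_two
  have hEZ : ∫ ω, Z ω ∂μ = 0 := by
    rw [hZ]
    rw [integral_finset_sum _ (fun i _ => ((hL2 i).integrable one_le_two).const_mul (c i))]
    simp [integral_const_mul, hmean]
  have hVarZ : variance Z μ = (((s.left.card : ℝ))⁻¹ + ((s.right.card : ℝ))⁻¹) * σ ^ 2 := by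
    rw [hZeq, IndepFun.variance_sum (fun i _ => (hL2 i).const_mul (c i))
      (fun i _ j _ hij => (hindep.indepFun hij).comp
        (measurable_const_mul (c i)) (measurable_const_mul (c j)))]
    have h0 : ∀ i ∈ s.node, variance (fun ω => c i * ε i ω) μ = (c i) ^ 2 * σ ^ 2 := by
      intro i _; rw [variance_const_mul, hvar]
    rw [Finset.sum_congr rfl h0, Split.node, Finset.sum_union s.disjoint]
    have h1 : ∀ i ∈ s.left, (c i) ^ 2 * σ ^ 2 = ((s.left.card : ℝ))⁻¹ ^ 2 * σ ^ 2 := by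
      intro i hi; rw [hc]; simp [hi]
    have h2 : ∀ i ∈ s.right, (c i) ^ 2 * σ ^ 2 = ((s.right.card : ℝ))⁻¹ ^ 2 * σ ^ 2 := by
      intro i hi
      have : i ∉ s.left := Finset.disjoint_right.mp s.disjoint hi
      rw [hc]; simp [this]
    rw [Finset.sum_congr rfl h1, Finset.sum_congr rfl h2, Finset.sum_const, Finset.sum_const,
      nsmul_eq_mul, nsmul_eq_mul]
    field_simp
  have hEZ2 : ∫ ω, Z ω ^ 2 ∂μ = (((s.left.card : ℝ))⁻¹ + ((s.right.card : ℝ))⁻¹) * σ ^ 2 := by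
    have hv := variance_eq_sub hZmem
    rw [hVarZ] at hv
    have h2 : (∫ ω, Z ω ^ 2 ∂μ) = μ[Z ^ 2] := rfl
    have hEZ' : μ[Z] = 0 := hEZ
    rw [hEZ'] at hv
    rw [h2]
    linarith [hv]
  have hpt : ∀ ω, (s.node.card : ℝ) * impurityDecrease s (fun i => f i + ε i ω)
      = (s.left.card * s.right.card / s.node.card) * (a + Z ω) ^ 2 := by
    intro ω
    rw [nodeCard_mul_impurity]
    congr 1
    have hmL : meanOn (fun i => f i + ε i ω) s.left
        = meanOn f s.left + meanOn (fun i => ε i ω) s.left := by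
      rw [meanOn, meanOn, meanOn, Finset.sum_add_distrib, add_div]
    have hmR : meanOn (fun i => f i + ε i ω) s.right
        = meanOn f s.right + meanOn (fun i => ε i ω) s.right := by
      rw [meanOn, meanOn, meanOn, Finset.sum_add_distrib, add_div]
    have hZω : Z ω = meanOn (fun i => ε i ω) s.left - meanOn (fun i => ε i ω) s.right := by
      show ∑ i ∈ s.node, c i * ε i ω = _
      rw [Split.node, Finset.sum_union s.disjoint]
      have h1 : ∀ i ∈ s.left, c i * ε i ω = ((s.left.card : ℝ))⁻¹ * ε i ω := by
        intro i hi; simp only [hc]; rw [if_pos hi]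
      have h2 : ∀ i ∈ s.right, c i * ε i ω = -(((s.right.card : ℝ))⁻¹ * ε i ω) := by
        intro i hi
        have hni : i ∉ s.left := Finset.disjoint_right.mp s.disjoint hi
        simp only [hc]; rw [if_neg hni]; ring
      rw [Finset.sum_congr rfl h1, Finset.sum_congr rfl h2, Finset.sum_neg_distrib,
        ← Finset.mul_sum, ← Finset.mul_sum, meanOn, meanOn]
      field_simp
      ring
    rw [hmL, hmR, hZω, ha]
    ring
  have haZmem : MemLp (fun ω => a + Z ω) 2 μ := (memLp_const a).add hZmem
  have hsqint : Integrable (fun ω => (a + Z ω) ^ 2) μ := haZmem.integrable_sq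
  have hint : Integrable
      (fun ω => ((s.left.card : ℝ) * s.right.card / (s.node.card : ℝ)) * (a + Z ω) ^ 2) μ :=
    hsqint.const_mul _
  have hI : ∫ ω, (a + Z ω) ^ 2 ∂μ
      = a ^ 2 + (((s.left.card : ℝ))⁻¹ + ((s.right.card : ℝ))⁻¹) * σ ^ 2 := by
    have heq : ∀ ω, (a + Z ω) ^ 2 = (a ^ 2 + 2 * a * Z ω) + Z ω ^ 2 := fun ω => by ring
    have h1 : Integrable (fun ω => a ^ 2 + 2 * a * Z ω) μ :=
      (integrable_const _).add (hZint.const_mul _)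
    rw [integral_congr_ae (Filter.Eventually.of_forall heq),
      integral_add h1 hZmem.integrable_sq,
      integral_add (integrable_const _) (hZint.const_mul _),
      integral_const, integral_const_mul, hEZ, hEZ2]
    simp
  refine ⟨hint.congr (Filter.Eventually.of_forall fun ω => (hpt ω).symm), ?_⟩
  rw [integral_congr_ae (Filter.Eventually.of_forall hpt), integral_const_mul, hI,
    nodeCard_mul_impurity, ← ha]
  rw [node_card] at hN ⊢
  field_simp
  ring

/-- **Proposition (optimism bias of MDI).** For a fixed tree structure and fixed-design responses
`y i = f i + ε i` with independent mean-zero noise of variance `σ²`, the expected MDI of feature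
`k` equals the noiseless MDI plus `σ² |S⁽ᵏ⁾| / n`. -/
theorem expected_mdi_eq_noiseless_add_bias {n p : ℕ} {Ω : Type} [MeasurableSpace Ω]
    (μ : Measure Ω) [IsProbabilityMeasure μ]
    (S : Finset (Split n)) (hS : IsTreeStructure S) (feat : Split n → Fin p) (k : Fin p)
    (f : Fin n → ℝ) (ε : Fin n → Ω → ℝ) (σ : ℝ)
    (hindep : ProbabilityTheory.iIndepFun ε μ)
    (hL2 : ∀ i, MemLp (ε i) 2 μ)
    (hmean : ∀ i, ∫ ω, ε i ω ∂μ = 0)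
    (hvar : ∀ i, ProbabilityTheory.variance (ε i) μ = σ ^ 2) :
    ∫ ω, MDI S feat k (fun i => f i + ε i ω) ∂μ
      = MDI S feat k f + σ ^ 2 * ((S.filter fun s => feat s = k).card : ℝ) / n := by
  classical
  have haux := fun s => aux_split μ s f ε σ hindep hL2 hmean hvar
  simp only [MDI]
  rw [integral_const_mul, integral_finset_sum _ (fun s _ => (haux s).1),
    Finset.sum_congr rfl (fun s _ => (haux s).2), Finset.sum_add_distrib,
    Finset.sum_const, nsmul_eq_mul]
  ring
end

section
/- Let S be a tree structure on {1,…,n} with splits partitioned as S = S^(1) ⊔ … ⊔ S^(p), let y ∈ ℝⁿ, and let ŷ denote the orthogonal projection of y onto the linear span of the constant vector of all ones together with all stumps {ψ_s : s ∈ S}. For each k, let P_k y := Σ_{s∈S^(k)} (⟨ψ_s, y⟩ / ‖ψ_s‖²) ψ_s denote the orthogonal projection of y onto the span of the stumps in S^(k). Then the full fitted values decompose as ŷ = ȳ·1 + Σ_{k=1}^p P_k y, and for each k the vector ȳ·1 + P_k y equals the orthogonal projection of y onto the span of the constant vector together with {ψ_s : s ∈ S^(k)} (i.e., the fitted values of regressing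 y on block k alone coincide with the block-k component of the full regression). -/
open Finset MeasureTheory RealInnerProductSpace

-- AUX LEMMAS
section Aux
variable {n : ℕ}

lemma stump_apply_left {s : Split n} {i : Fin n} (h : i ∈ s.left) :
    stump s i = (s.right.card : ℝ) / Real.sqrt (s.left.card * s.right.card) := by
  simp [stump, h]

lemma stump_apply_right {s : Split n} {i : Fin n} (h : i ∈ s.right) :
    stump s i = -(s.left.card : ℝ) / Real.sqrt (s.left.card * s.right.card) := by
  have h' : i ∉ s.left := Finset.disjoint_right.mp s.disjoint h
  simp [stump, h, h']

lemma stump_eq_zero {s : Split n} {i : Fin n} (h : i ∉ s.node) : stump s i = 0 := by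
  rw [Split.node, Finset.mem_union, not_or] at h
  simp [stump, h.1, h.2]

lemma sum_stump_on {s : Split n} {t : Finset (Fin n)} (h : s.node ⊆ t) :
    ∑ i ∈ t, stump s i = 0 := by
  have h0 : ∑ i ∈ s.node, stump s i = ∑ i ∈ t, stump s i :=
    Finset.sum_subset h (fun i _ hi => stump_eq_zero hi)
  rw [← h0, show s.node = s.left ∪ s.right from rfl, Finset.sum_union s.disjoint]
  have hL : ∑ i ∈ s.left, stump s i
      = ∑ _i ∈ s.left, ((s.right.card : ℝ) / Real.sqrt (s.left.card * s.right.card)) :=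
    Finset.sum_congr rfl fun i hi => stump_apply_left hi
  have hR : ∑ i ∈ s.right, stump s i
      = ∑ _i ∈ s.right, (-(s.left.card : ℝ) / Real.sqrt (s.left.card * s.right.card)) :=
    Finset.sum_congr rfl fun i hi => stump_apply_right hi
  rw [hL, hR]
  simp only [Finset.sum_const, nsmul_eq_mul]
  ring

lemma sum_stump_sq (s : Split n) :
    ∑ i, stump s i ^ 2 = (s.left.card : ℝ) + s.right.card := by
  have h0 : ∑ i ∈ s.node, stump s i ^ 2 = ∑ i, stump s i ^ 2 :=
    Finset.sum_subset (Finset.subset_univ s.node)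
      (fun i _ hi => by rw [stump_eq_zero hi]; ring)
  rw [← h0, show s.node = s.left ∪ s.right from rfl, Finset.sum_union s.disjoint]
  have hL : ∑ i ∈ s.left, stump s i ^ 2
      = ∑ _i ∈ s.left,
          ((s.right.card : ℝ) / Real.sqrt (s.left.card * s.right.card)) ^ 2 :=
    Finset.sum_congr rfl fun i hi => by rw [stump_apply_left hi]
  have hR : ∑ i ∈ s.right, stump s i ^ 2
      = ∑ _i ∈ s.right,
          (-(s.left.card : ℝ) / Real.sqrt (s.left.card * s.right.card)) ^ 2 :=
    Finset.sum_congr rfl fun i hi => by rw [stump_apply_right hi]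
  rw [hL, hR]
  simp only [Finset.sum_const, nsmul_eq_mul]
  have hLpos : (0:ℝ) < s.left.card := by exact_mod_cast Finset.card_pos.mpr s.left_nonempty
  have hRpos : (0:ℝ) < s.right.card := by exact_mod_cast Finset.card_pos.mpr s.right_nonempty
  have hc : Real.sqrt ((s.left.card : ℝ) * s.right.card) ^ 2
      = (s.left.card : ℝ) * s.right.card := Real.sq_sqrt (by positivity)
  have hLR : (s.left.card : ℝ) * s.right.card ≠ 0 := by positivity
  rw [neg_div, neg_sq, div_pow, div_pow, hc]
  field_simp
  ring

lemma sum_stump_sq_pos (s : Split n) : 0 < ∑ i, stump s i ^ 2 := by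
  rw [sum_stump_sq]
  have hL : (0:ℝ) < s.left.card := by exact_mod_cast Finset.card_pos.mpr s.left_nonempty
  have hR : (0:ℝ) < s.right.card := by exact_mod_cast Finset.card_pos.mpr s.right_nonempty
  linarith

lemma inner_stump_zero_of_subset {s s' : Split n}
    (h : s'.node ⊆ s.left ∨ s'.node ⊆ s.right) :
    ∑ i, stump s i * stump s' i = 0 := by
  have h0 : ∑ i ∈ s'.node, stump s i * stump s' i = ∑ i, stump s i * stump s' i :=
    Finset.sum_subset (Finset.subset_univ s'.node)
      (fun i _ hi => by rw [stump_eq_zero hi, mul_zero])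
  rw [← h0]
  rcases h with h | h
  · have h1 : ∑ i ∈ s'.node, stump s i * stump s' i
        = ∑ i ∈ s'.node, ((s.right.card : ℝ) / Real.sqrt (s.left.card * s.right.card))
            * stump s' i :=
      Finset.sum_congr rfl fun i hi => by rw [stump_apply_left (h hi)]
    rw [h1, ← Finset.mul_sum, sum_stump_on (subset_refl _), mul_zero]
  · have h1 : ∑ i ∈ s'.node, stump s i * stump s' i
        = ∑ i ∈ s'.node, (-(s.left.card : ℝ) / Real.sqrt (s.left.card * s.right.card))
            * stump s' i :=
      Finset.sum_congr rfl fun i hi => by rw [stump_apply_right (h hi)]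
    rw [h1, ← Finset.mul_sum, sum_stump_on (subset_refl _), mul_zero]

lemma stump_orth {s s' : Split n}
    (h : s.node ∩ s'.node = ∅ ∨ s'.node ⊆ s.left ∨ s'.node ⊆ s.right ∨
      s.node ⊆ s'.left ∨ s.node ⊆ s'.right) :
    ∑ i, stump s i * stump s' i = 0 := by
  rcases h with h | h | h | h | h
  · apply Finset.sum_eq_zero
    intro i _
    by_cases hi : i ∈ s.node
    · have hi' : i ∉ s'.node := fun hi' => by
        have hmem : i ∈ s.node ∩ s'.node := Finset.mem_inter.mpr ⟨hi, hi'⟩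
        simp [h] at hmem
      rw [stump_eq_zero hi', mul_zero]
    · rw [stump_eq_zero hi, zero_mul]
  · exact inner_stump_zero_of_subset (Or.inl h)
  · exact inner_stump_zero_of_subset (Or.inr h)
  · rw [Finset.sum_congr rfl (fun i _ => mul_comm (stump s i) (stump s' i))]
    exact inner_stump_zero_of_subset (Or.inl h)
  · rw [Finset.sum_congr rfl (fun i _ => mul_comm (stump s i) (stump s' i))]
    exact inner_stump_zero_of_subset (Or.inr h)

lemma proj_eq (S : Finset (Split n)) (hS : IsTreeStructure S)
    (y : EuclideanSpace ℝ (Fin n)) (ybar : ℝ) (hybar : ybar = (∑ i, y i) / n) :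
    ∀ i, (Submodule.orthogonalProjectionOnto
        (Submodule.span ℝ (insert (ones n) (stump '' (↑S : Set (Split n))))) y :
          EuclideanSpace ℝ (Fin n)) i
      = ybar + ∑ s ∈ S, ((∑ j, stump s j * y j) / ∑ j, stump s j ^ 2) * stump s i := by
  set c : Split n → ℝ := fun s => (∑ j, stump s j * y j) / ∑ j, stump s j ^ 2 with hc
  set v : EuclideanSpace ℝ (Fin n) := ybar • ones n + ∑ s ∈ S, c s • stump s with hv
  have hvi : ∀ i, v i = ybar + ∑ s ∈ S, c s * stump s i := by
    intro i
    rw [hv]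
    rw [PiLp.add_apply, PiLp.smul_apply, WithLp.ofLp_sum (s := S) (f := fun s => c s • stump s)]
    simp [ones]
  have hmem : v ∈ Submodule.span ℝ (insert (ones n) (stump '' (↑S : Set (Split n)))) := by
    apply Submodule.add_mem
    · exact Submodule.smul_mem _ _ (Submodule.subset_span (Set.mem_insert _ _))
    · exact Submodule.sum_mem _ fun s hs => Submodule.smul_mem _ _
        (Submodule.subset_span (Set.mem_insert_of_mem _ ⟨s, hs, rfl⟩))
  have hsub : ∀ i, y i - v i = y i - ybar - ∑ s ∈ S, c s * stump s i := by
    intro i; rw [hvi i]; ring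
  have hgen : ∀ w ∈ (insert (ones n) (stump '' (↑S : Set (Split n))) :
      Set (EuclideanSpace ℝ (Fin n))), @inner ℝ _ _ (y - v) w = (0:ℝ) := by
    intro w hw
    rcases hw with hw | ⟨s₀, hs₀, rfl⟩
    · subst hw
      simp only [PiLp.inner_apply, RCLike.inner_apply, conj_trivial, PiLp.sub_apply, ones,
        mul_one]
      rw [Finset.sum_congr rfl fun i _ => one_mul (y i - v i)]
      calc ∑ i, (y i - v i) = ∑ i, (y i - ybar - ∑ s ∈ S, c s * stump s i) :=
            Finset.sum_congr rfl fun i _ => hsub i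
        _ = ∑ i, y i - (n : ℝ) * ybar - ∑ s ∈ S, c s * ∑ i, stump s i := by
            rw [Finset.sum_sub_distrib, Finset.sum_sub_distrib, Finset.sum_const,
              Finset.sum_comm]
            simp only [Finset.card_univ, Fintype.card_fin, nsmul_eq_mul]
            rw [Finset.sum_congr rfl fun s (_ : s ∈ S) => (Finset.mul_sum _ _ _).symm]
        _ = ∑ i, y i - (n : ℝ) * ybar := by
            rw [Finset.sum_congr rfl fun s (_ : s ∈ S) => by
              rw [sum_stump_on (Finset.subset_univ _), mul_zero]]
            simp
        _ = 0 := by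
            rcases Nat.eq_zero_or_pos n with hn | hn
            · subst hn; simp
            · have hn' : (n : ℝ) ≠ 0 := by positivity
              rw [hybar]; field_simp; ring
    · simp only [PiLp.inner_apply, RCLike.inner_apply, conj_trivial, PiLp.sub_apply]
      have h2 : ∑ i, ybar * stump s₀ i = 0 := by
        rw [← Finset.mul_sum, sum_stump_on (Finset.subset_univ _), mul_zero]
      have h3 : ∑ i, (∑ s ∈ S, c s * stump s i) * stump s₀ i
          = c s₀ * ∑ i, stump s₀ i ^ 2 := by
        calc ∑ i, (∑ s ∈ S, c s * stump s i) * stump s₀ i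
            = ∑ i, ∑ s ∈ S, c s * (stump s i * stump s₀ i) := by
              refine Finset.sum_congr rfl fun i _ => ?_
              rw [Finset.sum_mul]
              exact Finset.sum_congr rfl fun s _ => by ring
          _ = ∑ s ∈ S, ∑ i, c s * (stump s i * stump s₀ i) := Finset.sum_comm
          _ = ∑ s ∈ S, c s * ∑ i, stump s i * stump s₀ i :=
              Finset.sum_congr rfl fun s _ => (Finset.mul_sum _ _ _).symm
          _ = c s₀ * ∑ i, stump s₀ i * stump s₀ i := by
              refine Finset.sum_eq_single s₀ (fun s hs hne => ?_) (fun h => absurd hs₀ h)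
              rw [stump_orth (hS s hs s₀ hs₀ hne), mul_zero]
          _ = c s₀ * ∑ i, stump s₀ i ^ 2 := by
              congr 1
              exact Finset.sum_congr rfl fun i _ => (sq (stump s₀ i)).symm
      rw [Finset.sum_congr rfl fun i _ => mul_comm (stump s₀ i) (y i - v i)]
      calc ∑ i, (y i - v i) * stump s₀ i
          = ∑ i, (y i * stump s₀ i - ybar * stump s₀ i
              - (∑ s ∈ S, c s * stump s i) * stump s₀ i) :=
            Finset.sum_congr rfl fun i _ => by rw [hsub i]; ring
        _ = ∑ i, y i * stump s₀ i - ∑ i, ybar * stump s₀ i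
              - ∑ i, (∑ s ∈ S, c s * stump s i) * stump s₀ i := by
            rw [Finset.sum_sub_distrib, Finset.sum_sub_distrib]
        _ = ∑ i, y i * stump s₀ i - c s₀ * ∑ i, stump s₀ i ^ 2 := by
            rw [h2, h3, sub_zero]
        _ = 0 := by
            have hpos := sum_stump_sq_pos s₀
            have hne : (∑ i, stump s₀ i ^ 2) ≠ 0 := ne_of_gt hpos
            simp only [hc]
            rw [div_mul_cancel₀ _ hne, sub_eq_zero]
            exact Finset.sum_congr rfl fun i _ => mul_comm _ _
  have hproj : (Submodule.orthogonalProjectionOnto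
      (Submodule.span ℝ (insert (ones n) (stump '' (↑S : Set (Split n))))) y :
        EuclideanSpace ℝ (Fin n)) = v := by
    refine (Submodule.starProjection_apply _ _).symm.trans (Submodule.eq_starProjection_of_mem_of_inner_eq_zero hmem fun w hw => ?_)
    induction hw using Submodule.span_induction with
    | mem w hw => exact hgen w hw
    | zero => exact inner_zero_right _
    | add w₁ w₂ _ _ h₁ h₂ => rw [inner_add_right, h₁, h₂, add_zero]
    | smul a w _ h => rw [inner_smul_right, h, mul_zero]
  intro i
  rw [hproj]
  exact hvi i

end Aux

/-- The full fitted values of the regression of `y` on all stumps (with intercept) decompose as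
`ŷ = ȳ·1 + Σ_k P_k y` where `P_k y` is the projection of `y` onto the span of the stumps of
feature `k`; moreover `ȳ·1 + P_k y` is the orthogonal projection of `y` onto the span of the
constant vector together with feature `k`'s stumps. -/
theorem fitted_values_block_decomposition {n p : ℕ} (S : Finset (Split n))
    (hS : IsTreeStructure S) (feat : Split n → Fin p) (y : EuclideanSpace ℝ (Fin n))
    (ybar : ℝ) (hybar : ybar = (∑ i, y i) / n)
    (P : Fin p → EuclideanSpace ℝ (Fin n))
    (hP : ∀ k, ∀ i, P k i = ∑ s ∈ S.filter (fun s => feat s = k),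
        ((∑ j, stump s j * y j) / ∑ j, stump s j ^ 2) * stump s i) :
    (∀ i, (Submodule.orthogonalProjectionOnto
        (Submodule.span ℝ (insert (ones n) (stump '' (↑S : Set (Split n))))) y :
          EuclideanSpace ℝ (Fin n)) i = ybar + ∑ k, P k i) ∧
    ∀ k, ∀ i, ybar + P k i
      = (Submodule.orthogonalProjectionOnto (Submodule.span ℝ
          (insert (ones n)
            (stump '' (↑(S.filter fun s => feat s = k) : Set (Split n))))) y :
              EuclideanSpace ℝ (Fin n)) i := by
  constructor
  · intro i
    rw [proj_eq S hS y ybar hybar i]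
    congr 1
    have h1 : ∀ k, P k i = ∑ s ∈ S.filter (fun s => feat s = k),
        ((∑ j, stump s j * y j) / ∑ j, stump s j ^ 2) * stump s i := fun k => hP k i
    rw [Finset.sum_congr rfl fun k (_ : k ∈ Finset.univ) => h1 k]
    exact (Finset.sum_fiberwise S feat (fun s => ((∑ j, stump s j * y j) / ∑ j, stump s j ^ 2) * stump s i)).symm
  · intro k i
    have hS' : IsTreeStructure (S.filter fun s => feat s = k) := by
      intro s hs s' hs' hne
      exact hS s (Finset.mem_of_mem_filter s hs) s' (Finset.mem_of_mem_filter s' hs') hne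
    rw [hP k i, proj_eq (S.filter fun s => feat s = k) hS' y ybar hybar i]
end
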